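/- For n ≥ 2, the convex hull of the set Sₙ \ {0} = {x₁, ..., x_{n+1}} (where xᵢ = -e_{n-i+1} + Σ_{j=n-i+2}^{n} e_j for 1 ≤ i ≤ n and x_{n+1} = (1,...,1)) contains an open ball around the origin; consequently Sₙ \ {0} is not contained in any open half-space {x : ⟨v,x⟩ > 0} with v ≠ 0. -/

import Mathlib

/-!
The points `x₁, …, x_{n+1}` are affinely independent: the differences `xᵢ - x_{n+1}` form a
triangular matrix (after reversing the rows) with `-2` on the diagonal. So they are the vertices of
a simplex in `ℝⁿ`, and `0` is a convex combination of them with all weights positive, namely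
`1/2, 1/4, …, 1/2ⁿ, 1/2ⁿ`; hence `0` is interior to the simplex. A vector `v ≠ 0` with
`⟪v, xᵢ⟫ > 0` for all `i` would make `⟪v, ·⟫ ≥ 0` on the simplex, which fails at `-t v` for small
`t > 0`.
-/

open scoped RealInnerProductSpace

/-- For `1 ≤ i ≤ n`, the vector `xᵢ = -e_{n-i+1} + Σ_{j=n-i+2}^n e_j`; for `i = n+1`
this gives the all-ones vector `(1,…,1)`.  (Coordinates are 0-indexed: coordinate `t`
is `0` if `t + i < n`, `-1` if `t + i = n`, and `1` if `t + i > n`.) -/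
def xvec (n : ℕ) (i : ℕ) : EuclideanSpace ℝ (Fin n) := WithLp.toLp 2 fun t =>
  if (t : ℕ) + i < n then 0 else if (t : ℕ) + i = n then -1 else 1

/-- The set `Sₙ \ {0} = {x₁, …, x_{n+1}}`. -/
def Sset' (n : ℕ) : Set (EuclideanSpace ℝ (Fin n)) :=
  {y | ∃ i : ℕ, 1 ≤ i ∧ i ≤ n + 1 ∧ y = xvec n i}

open scoped Topology

theorem not_forall_inner_pos_of_zero_mem_interior_convexHull {E : Type*}
    [NormedAddCommGroup E] [InnerProductSpace ℝ E] {s : Set E}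
    (hs : (0 : E) ∈ interior (convexHull ℝ s)) {v : E} (hv : v ≠ 0) :
    ¬ ∀ y ∈ s, 0 < ⟪v, y⟫ := by
  intro hpos
  have hhull : convexHull ℝ s ⊆ {x | 0 ≤ ⟪v, x⟫} :=
    convexHull_min (fun y hy => (hpos y hy).le)
      (convex_halfSpace_ge (innerₛₗ ℝ v).isLinear 0)
  have hnear : ∀ᶠ t in 𝓝[<] (0 : ℝ), t • v ∈ convexHull ℝ s := by
    have : Filter.Tendsto (fun t : ℝ => t • v) (𝓝 0) (𝓝 0) :=
      Continuous.tendsto' (by fun_prop) 0 0 (zero_smul ℝ v)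
    exact (this.mono_left nhdsWithin_le_nhds).eventually (mem_interior_iff_mem_nhds.mp hs)
  obtain ⟨t, hmem, ht⟩ := (hnear.and self_mem_nhdsWithin).exists
  have hinner : ⟪v, t • v⟫ = t * ‖v‖ ^ 2 := by
    rw [real_inner_smul_right, real_inner_self_eq_norm_sq]
  have hneg : t * ‖v‖ ^ 2 < 0 := mul_neg_of_neg_of_pos ht (pow_pos (norm_pos_iff.mpr hv) 2)
  have hge : 0 ≤ ⟪v, t • v⟫ := hhull hmem
  linarith

theorem AffineBasis.affineCombination_mem_interior_convexHull {ι E : Type*} [Fintype ι]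
    [NormedAddCommGroup E] [NormedSpace ℝ E] (b : AffineBasis ι ℝ E) {w : ι → ℝ}
    (hw : ∀ i, 0 < w i) (hw₁ : ∑ i, w i = 1) :
    Finset.univ.affineCombination ℝ b w ∈ interior (convexHull ℝ (Set.range b)) := by
  rw [b.interior_convexHull]
  intro i
  rw [b.coord_apply_combination_of_mem (Finset.mem_univ i) hw₁]
  exact hw i

/- The weights `1/2, 1/4, …, 1/2ⁿ, 1/2ⁿ`: each of the first `n` equals the sum of those after it,
which is what makes `∑ wᵢ xᵢ` vanish coordinatewise. -/
noncomputable def halvingWeight (n i : ℕ) : ℝ := if i = n then 2⁻¹ ^ n else 2⁻¹ ^ (i + 1)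

theorem halvingWeight_pos (n i : ℕ) : 0 < halvingWeight n i := by
  unfold halvingWeight; split <;> positivity

theorem sum_Ico_halvingWeight {n k : ℕ} (hk : k ≤ n) :
    ∑ i ∈ Finset.Ico k (n + 1), halvingWeight n i = 2⁻¹ ^ k := by
  induction hk using Nat.decreasingInduction with
  | self => simp [halvingWeight]
  | of_succ k hk ih =>
    rw [Finset.sum_eq_sum_Ico_succ_bot (by omega), ih, halvingWeight, if_neg hk.ne, pow_succ]
    ring

-- `simplexVertex n i` is the paper's `x_{i+1}`.
def simplexVertex (n : ℕ) (i : Fin (n + 1)) : EuclideanSpace ℝ (Fin n) := xvec n (i + 1)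

theorem range_simplexVertex (n : ℕ) : Set.range (simplexVertex n) = Sset' n := by
  ext y
  constructor
  · rintro ⟨i, rfl⟩
    exact ⟨i + 1, by omega, by omega, rfl⟩
  · rintro ⟨i, h₁, h₂, rfl⟩
    exact ⟨⟨i - 1, by omega⟩, congrArg (xvec n) (Nat.sub_add_cancel h₁)⟩

theorem simplexVertex_apply (n : ℕ) (i : Fin (n + 1)) (t : Fin n) :
    simplexVertex n i t =
      if (i : ℕ) < n - 1 - t then 0 else if (i : ℕ) = n - 1 - t then -1 else 1 := by
  have hlt : (t : ℕ) + (i + 1) < n ↔ (i : ℕ) < n - 1 - t := by omega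
  have heq : (t : ℕ) + (i + 1) = n ↔ (i : ℕ) = n - 1 - t := by omega
  simp only [simplexVertex, xvec, hlt, heq]

theorem sum_halvingWeight_mul_sign {n k : ℕ} (hk : k < n) :
    ∑ i ∈ Finset.range (n + 1),
      halvingWeight n i * (if i < k then 0 else if i = k then -1 else 1) = 0 := by
  rw [Finset.range_eq_Ico, ← Finset.sum_Ico_consecutive _ (Nat.zero_le k) (by omega : k ≤ n + 1),
    Finset.sum_eq_sum_Ico_succ_bot (by omega : k < n + 1)]
  have hlow : ∑ i ∈ Finset.Ico 0 k,
      halvingWeight n i * (if i < k then 0 else if i = k then -1 else 1) = 0 :=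
    Finset.sum_eq_zero fun i hi => by simp [(Finset.mem_Ico.mp hi).2]
  have hhigh : ∑ i ∈ Finset.Ico (k + 1) (n + 1),
      halvingWeight n i * (if i < k then 0 else if i = k then -1 else 1) = 2⁻¹ ^ (k + 1) := by
    rw [← sum_Ico_halvingWeight (by omega : k + 1 ≤ n)]
    refine Finset.sum_congr rfl fun i hi => ?_
    have := (Finset.mem_Ico.mp hi).1
    rw [if_neg (by omega), if_neg (by omega), mul_one]
  rw [hlow, hhigh, halvingWeight, if_neg hk.ne]
  simp

theorem sum_halvingWeight_smul_simplexVertex (n : ℕ) :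
    ∑ i : Fin (n + 1), halvingWeight n i • simplexVertex n i = 0 := by
  ext t
  simp only [WithLp.ofLp_sum, WithLp.ofLp_smul, Finset.sum_apply, Pi.smul_apply, smul_eq_mul,
    simplexVertex_apply]
  rw [Fin.sum_univ_eq_sum_range (fun i => halvingWeight n i *
    (if i < n - 1 - t then 0 else if i = n - 1 - t then -1 else 1))]
  exact sum_halvingWeight_mul_sign (by omega)

noncomputable def vertexDiffMatrix (n : ℕ) : Matrix (Fin n) (Fin n) ℝ :=
  Matrix.of fun i t => simplexVertex n i.castSucc t - simplexVertex n (Fin.last n) t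

theorem vertexDiffMatrix_rev_apply {n : ℕ} (j t : Fin n) :
    vertexDiffMatrix n j.rev t = if t < j then -1 else if t = j then -2 else 0 := by
  have hlt : (j.rev.castSucc : ℕ) < n - 1 - t ↔ t < j := by
    rw [Fin.lt_def, Fin.val_castSucc, Fin.val_rev]; omega
  have heq : (j.rev.castSucc : ℕ) = n - 1 - t ↔ t = j := by
    rw [Fin.ext_iff, Fin.val_castSucc, Fin.val_rev]; omega
  have hlast : ¬ ((Fin.last n : ℕ) < n - 1 - t) ∧ ¬ ((Fin.last n : ℕ) = n - 1 - t) := by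
    simp only [Fin.val_last]; omega
  simp only [vertexDiffMatrix, Matrix.of_apply, simplexVertex_apply, hlt, heq, hlast, if_false]
  split_ifs <;> norm_num

theorem isUnit_vertexDiffMatrix (n : ℕ) : IsUnit (vertexDiffMatrix n) := by
  have hlower : ((vertexDiffMatrix n).submatrix Fin.revPerm id).IsLowerTriangular :=
    fun j t (h : j < t) => by simp [vertexDiffMatrix_rev_apply, h.not_gt, h.ne']
  have hdet := Matrix.det_permute Fin.revPerm (vertexDiffMatrix n)
  rw [Matrix.det_of_isLowerTriangular _ hlower] at hdet
  simp only [Matrix.submatrix_apply, Fin.revPerm_apply, id, vertexDiffMatrix_rev_apply,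
    lt_irrefl, if_false, if_true, Finset.prod_const, Finset.card_univ, Fintype.card_fin] at hdet
  rw [Matrix.isUnit_iff_isUnit_det, isUnit_iff_ne_zero]
  intro h
  rw [h, mul_zero] at hdet
  exact pow_ne_zero n (by norm_num) hdet

theorem affineIndependent_simplexVertex (n : ℕ) : AffineIndependent ℝ (simplexVertex n) := by
  rw [affineIndependent_iff_linearIndependent_vsub ℝ _ (Fin.last n),
    ← linearIndependent_equiv (finSuccAboveEquiv (Fin.last n))]
  have hrows := Matrix.linearIndependent_rows_iff_isUnit.mpr (isUnit_vertexDiffMatrix n)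
  convert hrows.map' (EuclideanSpace.equiv (Fin n) ℝ).symm.toLinearEquiv.toLinearMap
    (LinearEquiv.ker _) using 1
  ext i t
  simp [vertexDiffMatrix, finSuccAboveEquiv_apply]

noncomputable def simplexBasis (n : ℕ) :
    AffineBasis (Fin (n + 1)) ℝ (EuclideanSpace ℝ (Fin n)) where
  toFun := simplexVertex n
  ind' := affineIndependent_simplexVertex n
  tot' := by
    rw [(affineIndependent_simplexVertex n).affineSpan_eq_top_iff_card_eq_finrank_add_one]
    simp

theorem zero_mem_interior_convexHull_Sset' (n : ℕ) :
    (0 : EuclideanSpace ℝ (Fin n)) ∈ interior (convexHull ℝ (Sset' n)) := by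
  have hw₁ : ∑ i : Fin (n + 1), halvingWeight n i = 1 := by
    rw [Fin.sum_univ_eq_sum_range (halvingWeight n), Finset.range_eq_Ico,
      sum_Ico_halvingWeight (Nat.zero_le n), pow_zero]
  have hzero :
      Finset.univ.affineCombination ℝ (simplexBasis n) (fun i => halvingWeight n i) = 0 := by
    rw [Finset.affineCombination_eq_linear_combination _ _ _ hw₁]
    exact sum_halvingWeight_smul_simplexVertex n
  rw [← range_simplexVertex, ← hzero]
  exact (simplexBasis n).affineCombination_mem_interior_convexHull
    (fun i => halvingWeight_pos n i) hw₁

theorem stmt18_general {n : ℕ} :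
    (∃ ε : ℝ, 0 < ε ∧ Metric.ball (0 : EuclideanSpace ℝ (Fin n)) ε ⊆
      convexHull ℝ (Sset' n)) ∧
    ∀ v : EuclideanSpace ℝ (Fin n), v ≠ 0 → ¬ (∀ y ∈ Sset' n, 0 < ⟪v, y⟫) := by
  have h₀ := zero_mem_interior_convexHull_Sset' n
  obtain ⟨ε, hε, hball⟩ := Metric.mem_nhds_iff.mp (mem_interior_iff_mem_nhds.mp h₀)
  exact ⟨⟨ε, hε, hball⟩, fun v hv => not_forall_inner_pos_of_zero_mem_interior_convexHull h₀ hv⟩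

theorem stmt18 {n : ℕ} (hn : 2 ≤ n) :
    (∃ ε : ℝ, 0 < ε ∧ Metric.ball (0 : EuclideanSpace ℝ (Fin n)) ε ⊆
      convexHull ℝ (Sset' n)) ∧
    ∀ v : EuclideanSpace ℝ (Fin n), v ≠ 0 → ¬ (∀ y ∈ Sset' n, 0 < ⟪v, y⟫) :=
  stmt18_general
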